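/- Let $\Field$ be a field, $R$ a commutative ring, and $n \geq 2$. Let $B$ be an $n \times (n+1)$ matrix over $\Field$ none of whose columns is zero, and for $0 \leq m \leq n$ let $B_m$ denote the $n\times n$ matrix obtained by deleting the $m$-th column. Then in the Steinberg module $\St_{\GL_n}(\Field;R) = \widetilde H_{n-2}(\Tits_{\GL_n}(\Field);R)$, the alternating sum of apartment classes vanishes: $\sum_{m=0}^{n} (-1)^m [\![B_m]\!] = 0$. -/

import Mathlib

open scoped Classical

section
variable (F : Type*) [Field F] (R : Type*) [CommRing R]

/-- A chain of `k` nonzero proper subspaces of `F^d`: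
`0 ⊊ V₀ ⊊ ⋯ ⊊ V_{k-1} ⊊ F^d`.  These are the `(k-1)`-simplices of the Tits
building of `GL_d(F)` (with `k = 0` giving the empty simplex of the augmented
complex). -/
def TFlag (d k : ℕ) : Type _ :=
  {V : Fin k → Submodule F (Fin d → F) // StrictMono V ∧ ∀ i, V i ≠ ⊥ ∧ V i ≠ ⊤}

/-- The module of simplicial `(k-1)`-chains (with `R` coefficients) of the Tits
building of `GL_d(F)`, in its augmented (reduced) version. -/
def TCh (d k : ℕ) := TFlag F d k →₀ R

noncomputable instance (d k : ℕ) : AddCommGroup (TCh F R d k) :=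
  inferInstanceAs (AddCommGroup (TFlag F d k →₀ R))
noncomputable instance (d k : ℕ) : Module R (TCh F R d k) :=
  inferInstanceAs (Module R (TFlag F d k →₀ R))

/-- The `i`-th face of a flag: delete the `i`-th subspace. -/
def tface {d k : ℕ} (V : TFlag F d (k + 1)) (i : Fin (k + 1)) : TFlag F d k :=
  ⟨V.1 ∘ i.succAbove, V.2.1.comp (Fin.strictMono_succAbove i), fun j => V.2.2 _⟩

/-- The simplicial boundary map of the (augmented) Tits building. -/
noncomputable def tbdry (d k : ℕ) : TCh F R d (k + 1) →ₗ[R] TCh F R d k :=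
  Finsupp.lsum R fun V =>
    ∑ i : Fin (k + 1), ((-1 : R) ^ (i : ℕ)) • Finsupp.lsingle (tface F V i)

/-- The basis chain associated to a sequence of subspaces: the corresponding
generator if the sequence is a valid flag, and `0` otherwise (as for a simplicial
map collapsing a degenerate simplex). -/
noncomputable def tchainOf {d k : ℕ} (V : Fin k → Submodule F (Fin d → F)) :
    TCh F R d k :=
  if h : StrictMono V ∧ ∀ i, V i ≠ ⊥ ∧ V i ≠ ⊤ then Finsupp.single ⟨V, h⟩ 1 else 0

/-- The apartment class of a `d × d` matrix `B` over `F` (with nonzero columns):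
the pushforward of the fundamental class of the barycentric subdivision of the
boundary of a `(d-1)`-simplex, i.e. the signed sum over all permutations `π` of the
flags `⟨v_{π(0)}⟩ ⊊ ⟨v_{π(0)}, v_{π(1)}⟩ ⊊ ⋯`, where `v_j` are the columns of `B`. -/
noncomputable def apartment (d : ℕ) (B : Matrix (Fin d) (Fin d) F) :
    TCh F R d (d - 1) :=
  ∑ π : Equiv.Perm (Fin d), ((Equiv.Perm.sign π : ℤ)) •
    tchainOf F R (fun k : Fin (d - 1) =>
      Submodule.span F ((fun i : Fin d => fun r => B r (π i)) '' {i | (i : ℕ) ≤ (k : ℕ)}))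

/-- The chain map on the Tits building induced by a matrix `g` acting on `F^d`. -/
noncomputable def tmap {d k : ℕ} (g : Matrix (Fin d) (Fin d) F) :
    TCh F R d k →ₗ[R] TCh F R d k :=
  Finsupp.lsum R fun V => LinearMap.toSpanSingleton R _
    (tchainOf F R (fun i => Submodule.map (Matrix.mulVecLin g) (V.1 i)))

end

/-! Writing each `[[Bₘ]]` as a signed sum over the orderings of the columns of `Bₘ`, the
alternating sum becomes one signed sum over all orderings `σ` of the `n + 1` columns of `B`,
the deleted column being `σ 0`. Each term is the flag spanned by the columns `σ 1, …, σ (n - 1)`,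
which does not see `σ 0` and `σ n`; exchanging these two pairs off the terms with opposite signs. -/

namespace Equiv.Perm

variable {n : ℕ}

def consSuccAbove (m : Fin (n + 1)) (π : Perm (Fin n)) : Perm (Fin (n + 1)) :=
  m.cycleRange.symm * decomposeFin.symm (0, π)

@[simp]
theorem consSuccAbove_zero (m : Fin (n + 1)) (π : Perm (Fin n)) : consSuccAbove m π 0 = m := by
  simp [consSuccAbove]

@[simp]
theorem consSuccAbove_succ (m : Fin (n + 1)) (π : Perm (Fin n)) (j : Fin n) :
    consSuccAbove m π j.succ = m.succAbove (π j) := by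
  simp [consSuccAbove]

theorem sign_consSuccAbove (m : Fin (n + 1)) (π : Perm (Fin n)) :
    (sign (consSuccAbove m π) : ℤ) = (-1) ^ (m : ℕ) * sign π := by
  simp [consSuccAbove]

theorem consSuccAbove_bijective :
    Function.Bijective fun p : Fin (n + 1) × Perm (Fin n) => consSuccAbove p.1 p.2 := by
  refine (Fintype.bijective_iff_injective_and_card _).2 ⟨?_, by simp [Fintype.card_perm,
    Nat.factorial_succ]⟩
  rintro ⟨m, π⟩ ⟨m', π'⟩ h
  obtain rfl : m = m' := by simpa using congr($h 0)
  obtain rfl : π = π' := ext fun j => by simpa using congr($h j.succ)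
  rfl

theorem sum_sign_smul_comp_succ {M : Type*} [AddCommGroup M] (g : (Fin n → Fin (n + 1)) → M) :
    ∑ σ : Perm (Fin (n + 1)), (sign σ : ℤ) • g (σ ∘ Fin.succ) =
      ∑ m : Fin (n + 1), (-1 : ℤ) ^ (m : ℕ) • ∑ π : Perm (Fin n), (sign π : ℤ) •
        g (m.succAbove ∘ π) := by
  rw [← Fintype.sum_bijective _ consSuccAbove_bijective _ _ fun _ => rfl, Fintype.sum_prod_type]
  refine Fintype.sum_congr _ _ fun m => ?_
  rw [Finset.smul_sum]
  refine Fintype.sum_congr _ _ fun π => ?_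
  rw [sign_consSuccAbove, mul_smul]
  congr 3
  funext j
  exact consSuccAbove_succ m π j

theorem sum_sign_smul_eq_zero_of_mul_swap {α M : Type*} [Fintype α] [DecidableEq α]
    [AddCommGroup M] (f : Perm α → M) {a b : α} (hab : a ≠ b)
    (hf : ∀ σ, f (σ * swap a b) = f σ) :
    ∑ σ : Perm α, (sign σ : ℤ) • f σ = 0 := by
  refine Finset.sum_ninvolution (· * swap a b) (fun σ => ?_) (fun σ _ h => hab ?_)
    (fun _ => Finset.mem_univ _) (fun σ => by simp [mul_assoc])
  · simp [hf, sign_swap hab]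
  · simpa using congr($h a).symm

end Equiv.Perm

section

variable (F : Type*) [Field F] (R : Type*) [CommRing R] {d N : ℕ}

noncomputable def prefixSpanChain (C : Matrix (Fin d) (Fin N) F) (τ : Fin d → Fin N) :
    TCh F R d (d - 1) :=
  tchainOf F R fun k : Fin (d - 1) =>
    Submodule.span F ((fun i r => C r (τ i)) '' {i | (i : ℕ) ≤ (k : ℕ)})

theorem apartment_submatrix (C : Matrix (Fin d) (Fin N) F) (f : Fin d → Fin N) :
    apartment F R d (fun i j => C i (f j)) =
      ∑ π : Equiv.Perm (Fin d), (Equiv.Perm.sign π : ℤ) • prefixSpanChain F R C (f ∘ π) :=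
  rfl

theorem prefixSpanChain_congr (C : Matrix (Fin d) (Fin N) F) {τ τ' : Fin d → Fin N}
    (h : ∀ i : Fin d, (i : ℕ) < d - 1 → τ i = τ' i) :
    prefixSpanChain F R C τ = prefixSpanChain F R C τ' := by
  unfold prefixSpanChain
  congr 1
  funext k
  congr 1
  refine Set.image_congr fun i (hi : (i : ℕ) ≤ k) => ?_
  rw [h i (hi.trans_lt k.isLt)]

end

theorem apartment_alternating_sum_eq_zero (F : Type*) [Field F] (R : Type*) [CommRing R]
    (m₀ : ℕ) (B : Matrix (Fin (m₀ + 2)) (Fin (m₀ + 3)) F) :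
    ∑ m : Fin (m₀ + 3), ((-1 : ℤ) ^ (m : ℕ)) •
      apartment F R (m₀ + 2) (fun i j => B i (m.succAbove j)) = 0 := by
  simp only [apartment_submatrix]
  rw [← Equiv.Perm.sum_sign_smul_comp_succ]
  refine Equiv.Perm.sum_sign_smul_eq_zero_of_mul_swap _ (Fin.last_pos.ne : 0 ≠ Fin.last _)
    fun σ => prefixSpanChain_congr F R B fun i hi => ?_
  have hi_succ : i.succ ≠ Fin.last _ := (Fin.succ_ne_last_iff _).2 (Fin.ne_of_val_ne hi.ne)
  exact congrArg σ (Equiv.swap_apply_of_ne_of_ne (Fin.succ_ne_zero i) hi_succ)
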